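/- arXiv:2603.12995 — 3 statements merged into one kernel-verified Lean document; each statement's English description precedes it below -/
import Mathlib

section
/- Every extreme point x of the subtour polytope S^n (the set of x in R^{E(K_n)} with 0 ≤ x_e ≤ 1 for all edges e, x(δ(v)) = 2 for every vertex v, and x(δ(S)) ≥ 2 for every proper nonempty subset S of vertices) has a support graph G_x = (V, {e : x_e > 0}) with at most 2n − 3 edges. -/
/-
Fix a vertex `v₀` and take a maximal laminar family `L` of tight sets avoiding `v₀`. Uncrossing
(`x(δS) + x(δT) = x(δ(S ∩ T)) + x(δ(S ∪ T)) + 2 x(E(S \ T, T \ S))`) shows that every direction `d`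
supported on the support of `x` and vanishing on the cuts of `L` vanishes on all tight cuts;
such a `d` keeps `x ± ηd` inside `S^n` for small `η`, so extremality forces `d = 0`. Hence the
support is at most as large as `L`, and a laminar family of nonempty subsets of an
`(n - 1)`-element set has at most `2(n - 1) - 1` members.
-/

open Finset
open scoped Classical

noncomputable section

/-- Edge set of the complete graph `K_n` as non-diagonal elements of `Sym2 (Fin n)`. -/
def edgeSet (n : ℕ) : Finset (Sym2 (Fin n)) :=
  Finset.univ.filter (fun e => ¬ e.IsDiag)

/-- The cut `δ(S)`: edges with exactly one endpoint in `S`. -/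
def cut {n : ℕ} (S : Finset (Fin n)) : Finset (Sym2 (Fin n)) :=
  Finset.univ.filter (fun e => ¬ e.IsDiag ∧ ∃ u v : Fin n, e = s(u, v) ∧ u ∈ S ∧ v ∉ S)

/-- Membership in the subtour polytope `S^n`. -/
def InSubtour (n : ℕ) (x : Sym2 (Fin n) → ℝ) : Prop :=
  (∀ e ∈ edgeSet n, 0 ≤ x e ∧ x e ≤ 1) ∧
  (∀ v : Fin n, ∑ e ∈ cut ({v} : Finset (Fin n)), x e = 2) ∧
  (∀ S : Finset (Fin n), 2 ≤ S.card → S.card ≤ n - 2 → 2 ≤ ∑ e ∈ cut S, x e)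

/-- Extreme point of the subtour polytope: not a proper convex combination
(equivalently, not the midpoint of two distinct points of `S^n`). -/
def IsExtremePt (n : ℕ) (x : Sym2 (Fin n) → ℝ) : Prop :=
  InSubtour n x ∧
  ∀ y z : Sym2 (Fin n) → ℝ, InSubtour n y → InSubtour n z →
    (∀ e ∈ edgeSet n, x e = (y e + z e) / 2) → ∀ e ∈ edgeSet n, y e = z e

/-- Support edges of `x`: edges with strictly positive value. -/
def supportEdges {n : ℕ} (x : Sym2 (Fin n) → ℝ) : Finset (Sym2 (Fin n)) :=
  (edgeSet n).filter (fun e => 0 < x e)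

/-- Degree of a vertex in the support graph of `x`. -/
def supDeg {n : ℕ} (x : Sym2 (Fin n) → ℝ) (v : Fin n) : ℕ :=
  (cut ({v} : Finset (Fin n)) ∩ supportEdges x).card

/-- `x` is the incidence vector of a Hamiltonian cycle of `K_n`. -/
def IsHamCycle (n : ℕ) (x : Sym2 (Fin n) → ℝ) : Prop :=
  ∃ σ : Equiv.Perm (Fin n), σ.IsCycle ∧ σ.support = Finset.univ ∧
    ∀ e ∈ edgeSet n, x e = if (∃ v : Fin n, e = s(v, σ v)) then 1 else 0

/-- Cost `c^T x` over the edges of `K_n`. -/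
def cost {n : ℕ} (c x : Sym2 (Fin n) → ℝ) : ℝ := ∑ e ∈ edgeSet n, c e * x e

/-- `c` is a metric cost function: nonnegative (symmetry is built into `Sym2`)
and satisfying the triangle inequality. -/
def IsMetricCost (n : ℕ) (c : Sym2 (Fin n) → ℝ) : Prop :=
  (∀ e, 0 ≤ c e) ∧ ∀ i j k : Fin n, c s(i, k) ≤ c s(i, j) + c s(j, k)

open Filter Topology

section Laminar

variable {α : Type*}

def IsLaminarPair (S T : Finset α) : Prop :=
  Disjoint S T ∨ S ⊆ T ∨ T ⊆ S

def IsLaminar (L : Finset (Finset α)) : Prop :=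
  ∀ S ∈ L, ∀ T ∈ L, IsLaminarPair S T

theorem IsLaminarPair.symm {S T : Finset α} (h : IsLaminarPair S T) : IsLaminarPair T S := by
  rcases h with h | h | h
  · exact Or.inl h.symm
  · exact Or.inr (Or.inr h)
  · exact Or.inr (Or.inl h)

theorem IsLaminarPair.refl (S : Finset α) : IsLaminarPair S S :=
  Or.inr (Or.inl subset_rfl)

theorem IsLaminarPair.inter [DecidableEq α] {Q R S : Finset α} (hR : IsLaminarPair Q R)
    (hS : IsLaminarPair Q S) : IsLaminarPair Q (S ∩ R) := by
  rcases hS with hS | hS | hS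
  · exact Or.inl (hS.mono_right inter_subset_left)
  · rcases hR with hR | hR | hR
    · exact Or.inl (hR.mono_right inter_subset_right)
    · exact Or.inr (Or.inl (subset_inter hS hR))
    · exact Or.inr (Or.inr (inter_subset_right.trans hR))
  · exact Or.inr (Or.inr (inter_subset_left.trans hS))

theorem IsLaminarPair.union [DecidableEq α] {Q R S : Finset α} (hR : IsLaminarPair Q R)
    (hS : IsLaminarPair Q S) (hSR : (S ∩ R).Nonempty) : IsLaminarPair Q (S ∪ R) := by
  obtain ⟨a, ha⟩ := hSR
  obtain ⟨haS, haR⟩ := mem_inter.1 ha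
  rcases hS with hS | hS | hS
  · rcases hR with hR | hR | hR
    · exact Or.inl (disjoint_union_right.2 ⟨hS, hR⟩)
    · exact Or.inr (Or.inl (hR.trans subset_union_right))
    · exact absurd (hR haR) (disjoint_right.1 hS haS)
  · exact Or.inr (Or.inl (hS.trans subset_union_left))
  · rcases hR with hR | hR | hR
    · exact absurd (hS haS) (disjoint_right.1 hR haR)
    · exact Or.inr (Or.inl (hR.trans subset_union_right))
    · exact Or.inr (Or.inr (union_subset hS hR))

theorem nonempty_inter_of_not_isLaminarPair [DecidableEq α] {S T : Finset α}
    (h : ¬ IsLaminarPair S T) : (S ∩ T).Nonempty := by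
  rw [nonempty_iff_ne_empty, Ne, ← disjoint_iff_inter_eq_empty]
  exact fun hST => h (Or.inl hST)

theorem IsLaminar.mono {L L' : Finset (Finset α)} (hL : IsLaminar L) (h : L' ⊆ L) :
    IsLaminar L' :=
  fun S hS T hT => hL S (h hS) T (h hT)

theorem IsLaminar.insert [DecidableEq α] {L : Finset (Finset α)} {S : Finset α}
    (hL : IsLaminar L) (hS : ∀ R ∈ L, IsLaminarPair S R) : IsLaminar (insert S L) := by
  intro Q hQ R hR
  rcases mem_insert.1 hQ with rfl | hQL <;> rcases mem_insert.1 hR with rfl | hRL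
  · exact .refl _
  · exact hS R hRL
  · exact (hS Q hQL).symm
  · exact hL Q hQL R hRL

theorem IsLaminar.card_le [DecidableEq α] {L : Finset (Finset α)} {U : Finset α}
    (hL : IsLaminar L) (hLU : ∀ S ∈ L, S ⊆ U) (hne : ∀ S ∈ L, S.Nonempty) : #L ≤ 2 * #U - 1 := by
  induction U using Finset.strongInduction generalizing L with
  | H U ih =>
  have hLerase : #L - 1 ≤ #(L.erase U) := pred_card_le_card_erase
  rcases (L.erase U).eq_empty_or_nonempty with hempty | ⟨M₀, hM₀⟩
  · rcases L.eq_empty_or_nonempty with rfl | ⟨S, hS⟩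
    · simp
    have : 0 < #U := card_pos.2 ((hne S hS).mono (hLU S hS))
    rw [hempty, card_empty] at hLerase
    omega
  obtain ⟨M, hM, hMmax⟩ := (L.erase U).exists_max_image card ⟨M₀, hM₀⟩
  obtain ⟨hMU, hML⟩ := mem_erase.1 hM
  have hMsub : M ⊂ U := ssubset_of_subset_of_ne (hLU M hML) hMU
  have hMne := hne M hML
  have hdisj : ∀ S ∈ L.erase U, ¬ S ⊆ M → Disjoint S M := by
    intro S hS hSM
    rcases hL S (mem_of_mem_erase hS) M hML with h | h | h
    · exact h
    · exact absurd h hSM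
    · exact absurd (eq_of_subset_of_card_le h (hMmax S hS) ▸ subset_rfl) hSM
  have hL₁ := ih M hMsub (L := (L.erase U).filter (· ⊆ M))
    (hL.mono ((filter_subset _ _).trans (erase_subset _ _)))
    (fun S hS => (mem_filter.1 hS).2)
    (fun S hS => hne S (mem_of_mem_erase (mem_filter.1 hS).1))
  have hL₂ := ih (U \ M) (sdiff_ssubset hMsub.subset hMne)
    (L := (L.erase U).filter (¬ · ⊆ M))
    (hL.mono ((filter_subset _ _).trans (erase_subset _ _)))
    (fun S hS => subset_sdiff.2 ⟨hLU S (mem_of_mem_erase (mem_filter.1 hS).1),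
      hdisj S (mem_filter.1 hS).1 (mem_filter.1 hS).2⟩)
    (fun S hS => hne S (mem_of_mem_erase (mem_filter.1 hS).1))
  have hsplit := card_filter_add_card_filter_not (s := L.erase U) (· ⊆ M)
  have hUM : #(U \ M) = #U - #M := card_sdiff_of_subset hMsub.subset
  have hMlt : #M < #U := card_lt_card hMsub
  have hMpos : 0 < #M := card_pos.2 hMne
  omega

theorem exists_maximal_isLaminar [Fintype α] (T : Finset α → Prop) :
    ∃ L : Finset (Finset α), (∀ R ∈ L, T R) ∧ IsLaminar L ∧
      ∀ S, T S → (∀ R ∈ L, IsLaminarPair S R) → S ∈ L := by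
  let 𝒞 := (univ : Finset (Finset (Finset α))).filter fun L => (∀ R ∈ L, T R) ∧ IsLaminar L
  have h𝒞 : ∅ ∈ 𝒞 := mem_filter.2 ⟨mem_univ _, by simp, by simp [IsLaminar]⟩
  obtain ⟨L, hL, hmax⟩ := 𝒞.exists_max_image card ⟨∅, h𝒞⟩
  obtain ⟨hLT, hLlam⟩ := (mem_filter.1 hL).2
  refine ⟨L, hLT, hLlam, fun S hS hSL => ?_⟩
  by_contra hSnot
  have hins : insert S L ∈ 𝒞 := mem_filter.2 ⟨mem_univ _,
    fun R hR => (mem_insert.1 hR).elim (· ▸ hS) (hLT R), hLlam.insert hSL⟩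
  have := hmax _ hins
  rw [card_insert_of_notMem hSnot] at this
  omega

/-- Induction on the number of members of `L` that `S` crosses: `S ∩ R` and `S ∪ R` cross
fewer of them than `S` does. -/
theorem IsLaminar.forall_of_uncross [DecidableEq α] {T Z : Finset α → Prop}
    {L : Finset (Finset α)} (hL : IsLaminar L) (hLT : ∀ R ∈ L, T R)
    (hmax : ∀ S, T S → (∀ R ∈ L, IsLaminarPair S R) → S ∈ L)
    (hT : ∀ S R, T S → T R → ¬ IsLaminarPair S R → T (S ∩ R) ∧ T (S ∪ R))
    (hLZ : ∀ R ∈ L, Z R)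
    (hZ : ∀ S R, T S → T R → ¬ IsLaminarPair S R → Z R → Z (S ∩ R) → Z (S ∪ R) → Z S)
    (S : Finset α) (hS : T S) : Z S := by
  induction hk : #(L.filter (¬ IsLaminarPair S ·)) using Nat.strong_induction_on
    generalizing S with
  | _ k ih =>
  by_cases hcross : ∀ R ∈ L, IsLaminarPair S R
  · exact hLZ S (hmax S hS hcross)
  push Not at hcross
  obtain ⟨R, hRL, hSR⟩ := hcross
  obtain ⟨hinter, hunion⟩ := hT S R hS (hLT R hRL) hSR
  have hfewer : ∀ P : Finset α, R ⊆ P ∨ P ⊆ R →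
      (∀ Q ∈ L, IsLaminarPair S Q → IsLaminarPair P Q) →
      #(L.filter (¬ IsLaminarPair P ·)) < k := by
    intro P hP hPS
    have hsub : L.filter (¬ IsLaminarPair P ·) ⊆ (L.filter (¬ IsLaminarPair S ·)).erase R := by
      intro Q hQ
      obtain ⟨hQL, hPQ⟩ := mem_filter.1 hQ
      refine mem_erase.2 ⟨?_, mem_filter.2 ⟨hQL, fun hSQ => hPQ (hPS Q hQL hSQ)⟩⟩
      rintro rfl
      exact hPQ (hP.elim (fun h => Or.inr (Or.inr h)) fun h => Or.inr (Or.inl h))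
    have := card_le_card hsub
    rw [card_erase_of_mem (mem_filter.2 ⟨hRL, hSR⟩), hk] at this
    have : 0 < k := hk ▸ card_pos.2 ⟨R, mem_filter.2 ⟨hRL, hSR⟩⟩
    omega
  refine hZ S R hS (hLT R hRL) hSR (hLZ R hRL) (ih _ ?_ _ hinter rfl) (ih _ ?_ _ hunion rfl)
  · exact hfewer _ (Or.inr inter_subset_right) fun Q hQL hSQ =>
      ((hL Q hQL R hRL).inter hSQ.symm).symm
  · exact hfewer _ (Or.inl subset_union_right) fun Q hQL hSQ =>
      ((hL Q hQL R hRL).union hSQ.symm (nonempty_inter_of_not_isLaminarPair hSR)).symm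

end Laminar

variable {n : ℕ}

section Cut

theorem mk_mem_cut {S : Finset (Fin n)} {u v : Fin n} :
    s(u, v) ∈ cut S ↔ u ≠ v ∧ ((u ∈ S ∧ v ∉ S) ∨ (v ∈ S ∧ u ∉ S)) := by
  simp only [cut, mem_filter, mem_univ, true_and, Sym2.mk_isDiag_iff]
  constructor
  · rintro ⟨hne, a, b, hab, haS, hbS⟩
    rcases Sym2.eq_iff.1 hab with ⟨rfl, rfl⟩ | ⟨rfl, rfl⟩
    · exact ⟨hne, Or.inl ⟨haS, hbS⟩⟩
    · exact ⟨hne, Or.inr ⟨haS, hbS⟩⟩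
  · rintro ⟨hne, ⟨hu, hv⟩ | ⟨hv, hu⟩⟩
    · exact ⟨hne, u, v, rfl, hu, hv⟩
    · exact ⟨hne, v, u, Sym2.eq_swap.symm, hv, hu⟩

theorem cut_subset_edgeSet (S : Finset (Fin n)) : cut S ⊆ edgeSet n := fun _ he => by
  simp only [cut, edgeSet, mem_filter] at he ⊢
  exact ⟨he.1, he.2.1⟩

theorem cut_compl (S : Finset (Fin n)) : cut Sᶜ = cut S := by
  ext e
  induction e using Sym2.inductionOn with
  | hf u v => simp only [mk_mem_cut, mem_compl]; tauto

theorem cut_empty : cut (∅ : Finset (Fin n)) = ∅ := by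
  ext e
  induction e using Sym2.inductionOn with
  | hf u v => simp [mk_mem_cut]

theorem nonempty_of_sum_cut_ne_zero {S : Finset (Fin n)} {f : Sym2 (Fin n) → ℝ}
    (h : ∑ e ∈ cut S, f e ≠ 0) : S.Nonempty := by
  rw [nonempty_iff_ne_empty]
  rintro rfl
  simp [cut_empty] at h

def crossEdges (S T : Finset (Fin n)) : Finset (Sym2 (Fin n)) :=
  univ.filter fun e => ¬ e.IsDiag ∧ ∃ u v : Fin n, e = s(u, v) ∧ u ∈ S ∧ u ∉ T ∧ v ∈ T ∧ v ∉ S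

theorem mk_mem_crossEdges {S T : Finset (Fin n)} {u v : Fin n} :
    s(u, v) ∈ crossEdges S T ↔
      u ≠ v ∧ ((u ∈ S ∧ u ∉ T ∧ v ∈ T ∧ v ∉ S) ∨ (v ∈ S ∧ v ∉ T ∧ u ∈ T ∧ u ∉ S)) := by
  simp only [crossEdges, mem_filter, mem_univ, true_and, Sym2.mk_isDiag_iff]
  constructor
  · rintro ⟨hne, a, b, hab, h⟩
    rcases Sym2.eq_iff.1 hab with ⟨rfl, rfl⟩ | ⟨rfl, rfl⟩
    · exact ⟨hne, Or.inl h⟩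
    · exact ⟨hne, Or.inr h⟩
  · rintro ⟨hne, h | h⟩
    · exact ⟨hne, u, v, rfl, h⟩
    · exact ⟨hne, v, u, Sym2.eq_swap.symm, h⟩

theorem crossEdges_subset_edgeSet (S T : Finset (Fin n)) : crossEdges S T ⊆ edgeSet n :=
  fun _ he => by
    simp only [crossEdges, edgeSet, mem_filter] at he ⊢
    exact ⟨he.1, he.2.1⟩

theorem crossEdges_singleton {u v : Fin n} (huv : u ≠ v) :
    crossEdges {u} {v} = {s(u, v)} := by
  ext e
  induction e using Sym2.inductionOn with
  | hf a b =>
    simp only [mk_mem_crossEdges, mem_singleton, Sym2.eq_iff]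
    constructor
    · rintro ⟨-, ⟨rfl, -, rfl, -⟩ | ⟨rfl, -, rfl, -⟩⟩
      · exact Or.inl ⟨rfl, rfl⟩
      · exact Or.inr ⟨rfl, rfl⟩
    · rintro (⟨rfl, rfl⟩ | ⟨rfl, rfl⟩)
      · exact ⟨huv, Or.inl ⟨rfl, huv, rfl, huv.symm⟩⟩
      · exact ⟨huv.symm, Or.inr ⟨rfl, huv, rfl, huv.symm⟩⟩

theorem sum_cut_add_sum_cut (S T : Finset (Fin n)) (f : Sym2 (Fin n) → ℝ) :
    ∑ e ∈ cut S, f e + ∑ e ∈ cut T, f e =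
      ∑ e ∈ cut (S ∩ T), f e + ∑ e ∈ cut (S ∪ T), f e + 2 * ∑ e ∈ crossEdges S T, f e := by
  rw [← Fintype.sum_ite_mem (cut S), ← Fintype.sum_ite_mem (cut T),
    ← Fintype.sum_ite_mem (cut (S ∩ T)), ← Fintype.sum_ite_mem (cut (S ∪ T)),
    ← Fintype.sum_ite_mem (crossEdges S T), mul_sum, ← sum_add_distrib, ← sum_add_distrib,
    ← sum_add_distrib]
  refine sum_congr rfl fun e _ => ?_
  induction e using Sym2.inductionOn with
  | hf u v =>
    by_cases huv : u = v
    · simp [mk_mem_cut, mk_mem_crossEdges, huv]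
    by_cases huS : u ∈ S <;> by_cases huT : u ∈ T <;> by_cases hvS : v ∈ S <;>
      by_cases hvT : v ∈ T <;>
      simp [mk_mem_cut, mk_mem_crossEdges, huv, huS, huT, hvS, hvT] <;> ring

end Cut

section Subtour

variable {x d : Sym2 (Fin n) → ℝ}

theorem InSubtour.two_le_sum_cut (hx : InSubtour n x) {S : Finset (Fin n)} (hS : S.Nonempty)
    (hSu : S ≠ univ) : 2 ≤ ∑ e ∈ cut S, x e := by
  have hlt : #S < n := by simpa using card_lt_card (ssubset_univ_iff.2 hSu)
  obtain ⟨v, hv⟩ | ⟨v, hv⟩ | hmid : (∃ v, S = {v}) ∨ (∃ v, Sᶜ = {v}) ∨ (2 ≤ #S ∧ #S ≤ n - 2)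
  · have hc : #Sᶜ = n - #S := by simp [card_compl]
    have h1 := card_pos.2 hS
    by_cases h : #S = 1
    · exact Or.inl (card_eq_one.1 h)
    by_cases h' : #Sᶜ = 1
    · exact Or.inr (Or.inl (card_eq_one.1 h'))
    · omega
  · exact (hv ▸ hx.2.1 v).ge
  · exact (cut_compl S ▸ hv ▸ hx.2.1 v).ge
  · exact hx.2.2 S hmid.1 hmid.2

theorem InSubtour.uncross (hx : InSubtour n x) {S T : Finset (Fin n)} (hST : (S ∩ T).Nonempty)
    (hcov : S ∪ T ≠ univ) (hS : ∑ e ∈ cut S, x e = 2) (hT : ∑ e ∈ cut T, x e = 2) :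
    ∑ e ∈ cut (S ∩ T), x e = 2 ∧ ∑ e ∈ cut (S ∪ T), x e = 2 ∧ ∀ e ∈ crossEdges S T, x e = 0 := by
  have hnonneg : ∀ e ∈ crossEdges S T, 0 ≤ x e :=
    fun e he => (hx.1 e (crossEdges_subset_edgeSet S T he)).1
  have hinter := hx.two_le_sum_cut hST fun h => hcov (univ_subset_iff.1 (h ▸ inter_subset_union))
  have hunion := hx.two_le_sum_cut (hST.mono inter_subset_union) hcov
  have hcross := sum_nonneg hnonneg
  have hsum := sum_cut_add_sum_cut S T x
  refine ⟨by linarith, by linarith, (sum_eq_zero_iff_of_nonneg hnonneg).1 (by linarith)⟩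

theorem InSubtour.sum_cut_eq_zero_of_maximal (hx : InSubtour n x) {v₀ : Fin n}
    {L : Finset (Finset (Fin n))} (hL : IsLaminar L)
    (hLT : ∀ R ∈ L, v₀ ∉ R ∧ ∑ e ∈ cut R, x e = 2)
    (hmax : ∀ S, v₀ ∉ S ∧ ∑ e ∈ cut S, x e = 2 → (∀ R ∈ L, IsLaminarPair S R) → S ∈ L)
    (hd0 : ∀ e ∉ supportEdges x, d e = 0) (hdL : ∀ R ∈ L, ∑ e ∈ cut R, d e = 0)
    (S : Finset (Fin n)) (hS : ∑ e ∈ cut S, x e = 2) : ∑ e ∈ cut S, d e = 0 := by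
  have huncross : ∀ S R : Finset (Fin n), v₀ ∉ S ∧ ∑ e ∈ cut S, x e = 2 →
      v₀ ∉ R ∧ ∑ e ∈ cut R, x e = 2 → ¬ IsLaminarPair S R →
      ∑ e ∈ cut (S ∩ R), x e = 2 ∧ ∑ e ∈ cut (S ∪ R), x e = 2 ∧ ∀ e ∈ crossEdges S R, x e = 0 :=
    fun S R hS hR hSR => hx.uncross (nonempty_inter_of_not_isLaminarPair hSR)
      (fun h => (mem_union.1 (h ▸ mem_univ v₀)).elim hS.1 hR.1) hS.2 hR.2
  have hfree : ∀ S, v₀ ∉ S ∧ ∑ e ∈ cut S, x e = 2 → ∑ e ∈ cut S, d e = 0 := by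
    refine hL.forall_of_uncross hLT hmax (fun S R hS hR hSR => ?_) hdL
      (fun S R hS hR hSR hRd hinter hunion => ?_)
    · obtain ⟨hinter, hunion, -⟩ := huncross S R hS hR hSR
      exact ⟨⟨fun h => hS.1 (mem_of_mem_inter_left h), hinter⟩,
        ⟨fun h => (mem_union.1 h).elim hS.1 hR.1, hunion⟩⟩
    · obtain ⟨-, -, hcross⟩ := huncross S R hS hR hSR
      have hcross_d : ∑ e ∈ crossEdges S R, d e = 0 :=
        sum_eq_zero fun e he => hd0 e fun hsupp => (mem_filter.1 hsupp).2.ne' (hcross e he)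
      linarith [sum_cut_add_sum_cut S R d]
  by_cases hv₀ : v₀ ∈ S
  · rw [← cut_compl] at hS ⊢
    exact hfree Sᶜ ⟨fun h => mem_compl.1 h hv₀, hS⟩
  · exact hfree S ⟨hv₀, hS⟩

/-- An edge of value `1` spans a tight pair `{u, v}`. -/
theorem InSubtour.eq_zero_of_eq_one (hx : InSubtour n x)
    (hd : ∀ S, ∑ e ∈ cut S, x e = 2 → ∑ e ∈ cut S, d e = 0) {u v : Fin n} (huv : u ≠ v)
    (h1 : x s(u, v) = 1) : d s(u, v) = 0 := by
  have hpair : ∀ f : Sym2 (Fin n) → ℝ, ∑ e ∈ cut {u}, f e + ∑ e ∈ cut {v}, f e =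
      ∑ e ∈ cut ({u} ∪ {v}), f e + 2 * f s(u, v) := fun f => by
    simpa [cut_empty, crossEdges_singleton huv, huv] using sum_cut_add_sum_cut {u} {v} f
  have htight : ∑ e ∈ cut ({u} ∪ {v}), x e = 2 := by
    linarith [hpair x, hx.2.1 u, hx.2.1 v]
  linarith [hpair d, hd _ (hx.2.1 u), hd _ (hx.2.1 v), hd _ htight]

theorem tendsto_add_mul_nhds_zero (b c : ℝ) :
    Tendsto (fun η : ℝ => b + η * c) (𝓝 0) (𝓝 b) :=
  (show Continuous fun η : ℝ => b + η * c by fun_prop).tendsto' 0 b (by simp)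

theorem InSubtour.eventually_mem_Icc_add_mul (hx : InSubtour n x)
    (hd0 : ∀ e ∉ supportEdges x, d e = 0)
    (hd : ∀ S, ∑ e ∈ cut S, x e = 2 → ∑ e ∈ cut S, d e = 0) {e : Sym2 (Fin n)}
    (he : e ∈ edgeSet n) : ∀ᶠ η in 𝓝 (0 : ℝ), x e + η * d e ∈ Set.Icc 0 1 := by
  by_cases hde : d e = 0
  · exact Eventually.of_forall fun η => by simpa [hde] using hx.1 e he
  have hpos : 0 < x e := by
    by_contra h
    exact hde (hd0 e fun hsupp => h (mem_filter.1 hsupp).2)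
  have hlt : x e < 1 := by
    refine (hx.1 e he).2.lt_of_ne fun h1 => hde ?_
    induction e using Sym2.inductionOn with
    | hf u v => exact hx.eq_zero_of_eq_one hd (by simpa [edgeSet] using he) h1
  filter_upwards [(tendsto_add_mul_nhds_zero (x e) (d e)).eventually (lt_mem_nhds hpos),
    (tendsto_add_mul_nhds_zero (x e) (d e)).eventually (gt_mem_nhds hlt)] with η h0 h1
  exact ⟨h0.le, h1.le⟩

theorem InSubtour.eventually_add_mul (hx : InSubtour n x) (hd0 : ∀ e ∉ supportEdges x, d e = 0)
    (hd : ∀ S, ∑ e ∈ cut S, x e = 2 → ∑ e ∈ cut S, d e = 0) :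
    ∀ᶠ η in 𝓝 (0 : ℝ), InSubtour n fun e => x e + η * d e := by
  have hedge : ∀ᶠ η in 𝓝 (0 : ℝ), ∀ e ∈ edgeSet n, x e + η * d e ∈ Set.Icc 0 1 :=
    eventually_all.2 fun e => (eventually_imp_distrib_left.2
      fun he => hx.eventually_mem_Icc_add_mul hd0 hd he)
  have hcut : ∀ᶠ η in 𝓝 (0 : ℝ), ∀ S : Finset (Fin n), 2 ≤ #S → #S ≤ n - 2 →
      2 ≤ ∑ e ∈ cut S, x e + η * ∑ e ∈ cut S, d e := by
    refine eventually_all.2 fun S => ?_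
    by_cases hS : 2 ≤ #S ∧ #S ≤ n - 2 ∧ ∑ e ∈ cut S, x e ≠ 2
    · obtain ⟨h1, h2, hne⟩ := hS
      filter_upwards [(tendsto_add_mul_nhds_zero _ (∑ e ∈ cut S, d e)).eventually
        (lt_mem_nhds ((hx.2.2 S h1 h2).lt_of_ne hne.symm))] with η hη
      exact fun _ _ => hη.le
    · refine Eventually.of_forall fun η h1 h2 => ?_
      have htight : ∑ e ∈ cut S, x e = 2 := by tauto
      simp [htight, hd S htight]
  filter_upwards [hedge, hcut] with η hedge hcut
  refine ⟨hedge, fun v => ?_, fun S h1 h2 => ?_⟩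
  · simp [sum_add_distrib, ← mul_sum, hx.2.1 v, hd _ (hx.2.1 v)]
  · simpa [sum_add_distrib, ← mul_sum] using hcut S h1 h2

theorem IsExtremePt.eq_zero_of_eventually (hx : IsExtremePt n x)
    (h : ∀ᶠ η in 𝓝 (0 : ℝ), InSubtour n fun e => x e + η * d e) : ∀ e ∈ edgeSet n, d e = 0 := by
  have hneg : ∀ᶠ η in 𝓝 (0 : ℝ), InSubtour n fun e => x e + -η * d e :=
    (continuous_neg.tendsto' (0 : ℝ) 0 neg_zero).eventually h
  obtain ⟨η, ⟨hplus, hminus⟩, hη⟩ :=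
    ((h.and hneg).filter_mono nhdsWithin_le_nhds).and self_mem_nhdsWithin |>.exists
      (f := 𝓝[≠] (0 : ℝ))
  intro e he
  have := hx.2 _ _ hplus hminus (fun e _ => by ring) e he
  exact (mul_eq_zero.1 (by linarith : η * d e = 0)).resolve_left hη

end Subtour

theorem Matrix.card_le_card_of_mulVec_eq_zero {K ι κ : Type*} [Field K] [Fintype ι] [Fintype κ]
    (A : Matrix κ ι K) (hA : ∀ f, A.mulVec f = 0 → f = 0) : Fintype.card ι ≤ Fintype.card κ := by
  have hinj : Function.Injective A.mulVecLin :=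
    (injective_iff_map_eq_zero _).2 fun f hf => hA f hf
  simpa only [Module.finrank_fintype_fun_eq_card] using
    LinearMap.finrank_le_finrank_of_injective hinj

theorem card_supportEdges_le (x : Sym2 (Fin n) → ℝ) {L : Finset (Finset (Fin n))}
    (h : ∀ d : Sym2 (Fin n) → ℝ, (∀ e ∉ supportEdges x, d e = 0) →
      (∀ R ∈ L, ∑ e ∈ cut R, d e = 0) → ∀ e ∈ edgeSet n, d e = 0) :
    #(supportEdges x) ≤ #L := by
  let A : Matrix L (supportEdges x) ℝ := fun R e => if e.1 ∈ cut R.1 then 1 else 0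
  simpa using A.card_le_card_of_mulVec_eq_zero fun f hf => by
    let d : Sym2 (Fin n) → ℝ := fun e => if he : e ∈ supportEdges x then f ⟨e, he⟩ else 0
    have hd0 : ∀ e ∉ supportEdges x, d e = 0 := fun e he => dif_neg he
    have hA : ∀ R : L, A.mulVec f R = ∑ e ∈ cut R.1, d e := fun R => by
      calc A.mulVec f R = ∑ e ∈ supportEdges x, if e ∈ cut R.1 then d e else 0 := by
            rw [← sum_coe_sort (supportEdges x), Matrix.mulVec, dotProduct]
            refine sum_congr rfl fun e _ => ?_
            simp [A, d]
        _ = ∑ e ∈ cut R.1, d e := by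
            rw [sum_ite_mem]
            exact sum_subset inter_subset_right fun e he hnot =>
              hd0 e fun hs => hnot (mem_inter.2 ⟨hs, he⟩)
    funext e
    exact (dif_pos e.2).symm.trans (h d hd0 (fun R hR => (hA ⟨R, hR⟩).symm.trans
      (congrFun hf _)) e (mem_filter.1 e.2).1)

theorem support_card_le_general (n : ℕ) (x : Sym2 (Fin n) → ℝ)
    (hx : IsExtremePt n x) : (supportEdges x).card ≤ 2 * n - 3 := by
  rcases n.eq_zero_or_pos with rfl | hn
  · simp [eq_empty_of_isEmpty (supportEdges x)]
  let v₀ : Fin n := ⟨0, hn⟩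
  obtain ⟨L, hLT, hL, hmax⟩ :=
    exists_maximal_isLaminar fun S : Finset (Fin n) => v₀ ∉ S ∧ ∑ e ∈ cut S, x e = 2
  calc #(supportEdges x) ≤ #L := card_supportEdges_le x fun d hd0 hdL =>
        hx.eq_zero_of_eventually <| hx.1.eventually_add_mul hd0 <|
          hx.1.sum_cut_eq_zero_of_maximal hL hLT hmax hd0 hdL
    _ ≤ 2 * #(univ.erase v₀) - 1 := hL.card_le
        (fun R hR a ha => mem_erase.2 ⟨fun h => (hLT R hR).1 (h ▸ ha), mem_univ a⟩)
        (fun R hR => nonempty_of_sum_cut_ne_zero (by rw [(hLT R hR).2]; norm_num))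
    _ = 2 * n - 3 := by
        rw [card_erase_of_mem (mem_univ _), card_univ, Fintype.card_fin]
        omega

/-- Every extreme point of the subtour polytope has a support graph with
at most `2n - 3` edges. -/
theorem support_card_le (n : ℕ) (hn : 3 ≤ n) (x : Sym2 (Fin n) → ℝ)
    (hx : IsExtremePt n x) : (supportEdges x).card ≤ 2 * n - 3 :=
  support_card_le_general n x hx
end
end

section
/- The support graph of any point x of the subtour polytope S^n is 2-edge-connected. -/
open Finset
open scoped Classical

noncomputable section

/-- The support graph of any point of `S^n` is 2-edge-connected: every
nontrivial vertex cut is crossed by at least two support edges. -/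
theorem support_two_edge_connected (n : ℕ) (hn : 3 ≤ n) (x : Sym2 (Fin n) → ℝ)
    (hx : InSubtour n x) :
    ∀ S : Finset (Fin n), S.Nonempty → S ≠ Finset.univ →
      2 ≤ (cut S ∩ supportEdges x).card := by
  have cut_compl : ∀ S : Finset (Fin n), cut Sᶜ = cut S := by
    intro S
    ext e
    simp only [cut, Finset.mem_filter, Finset.mem_univ, true_and, Finset.mem_compl, not_not]
    constructor
    · rintro ⟨hd, u, v, rfl, hu, hv⟩
      exact ⟨hd, v, u, Sym2.eq_swap, hv, hu⟩
    · rintro ⟨hd, u, v, rfl, hu, hv⟩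
      exact ⟨hd, v, u, Sym2.eq_swap, hv, hu⟩
  have cut_sub : ∀ S : Finset (Fin n), cut S ⊆ edgeSet n := by
    intro S e he
    simp only [cut, Finset.mem_filter] at he
    simp only [edgeSet, Finset.mem_filter, Finset.mem_univ, true_and]
    exact he.2.1
  intro S hS hSne
  -- Step 1: the cut value is at least 2
  have hsum : (2 : ℝ) ≤ ∑ e ∈ cut S, x e := by
    have hcard_le : S.card ≤ n := by
      simpa using Finset.card_le_univ S
    have hcompl_card : Sᶜ.card = n - S.card := by
      simp [Finset.card_compl]
    by_cases h1 : S.card = 1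
    · obtain ⟨v, rfl⟩ := Finset.card_eq_one.mp h1
      exact le_of_eq (hx.2.1 v).symm
    · by_cases h2 : Sᶜ.card = 1
      · obtain ⟨v, hv⟩ := Finset.card_eq_one.mp h2
        rw [← cut_compl S, hv]
        exact le_of_eq (hx.2.1 v).symm
      · have hS1 : 1 ≤ S.card := Finset.card_pos.mpr hS
        have hSc : Sᶜ.Nonempty := by
          rw [← Finset.compl_ne_univ_iff_nonempty, compl_compl]
          exact hSne
        have hSc1 : 1 ≤ Sᶜ.card := Finset.card_pos.mpr hSc
        have : 2 ≤ S.card ∧ S.card ≤ n - 2 := by omega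
        exact hx.2.2 S this.1 this.2
  -- Step 2: the sum over the cut equals the sum over the support edges in the cut
  have hsum_eq : ∑ e ∈ cut S, x e = ∑ e ∈ cut S ∩ supportEdges x, x e := by
    refine (Finset.sum_subset Finset.inter_subset_left ?_).symm
    intro e he hnot
    have he' : e ∈ edgeSet n := cut_sub S he
    have h0 : 0 ≤ x e := (hx.1 e he').1
    by_contra hne
    have hpos : 0 < x e := lt_of_le_of_ne h0 (Ne.symm hne)
    exact hnot (Finset.mem_inter.mpr ⟨he, Finset.mem_filter.mpr ⟨he', hpos⟩⟩)
  -- Step 3: each edge contributes at most 1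
  have hle : ∑ e ∈ cut S ∩ supportEdges x, x e ≤ (cut S ∩ supportEdges x).card := by
    calc ∑ e ∈ cut S ∩ supportEdges x, x e ≤ ∑ _e ∈ cut S ∩ supportEdges x, (1 : ℝ) := by
          refine Finset.sum_le_sum ?_
          intro e he
          exact (hx.1 e (cut_sub S (Finset.mem_inter.mp he).1)).2
      _ = (cut S ∩ supportEdges x).card := by simp
  have : (2 : ℝ) ≤ (cut S ∩ supportEdges x).card := by
    rw [hsum_eq] at hsum; linarith
  exact_mod_cast this
end
end

section
/- If x is an extreme point of the subtour polytope S^{n} and e = {u,v} is an edge with x_e = 1, then the point x' obtained by subdividing e — i.e., adding a new vertex w, replacing e by edges {u,w} and {w,v} with value 1, and keeping all other coordinates (with all other edges incident to w set to 0) — is an extreme point of the subtour polytope S^{n+1}. -/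
open Finset
open scoped Classical

noncomputable section

lemma mem_edgeSet {n : ℕ} (a b : Fin n) : s(a,b) ∈ edgeSet n ↔ a ≠ b := by
  simp [edgeSet]

lemma cut_sum {n : ℕ} (S : Finset (Fin n)) (x : Sym2 (Fin n) → ℝ) :
    ∑ e ∈ cut S, x e = ∑ a ∈ S, ∑ b ∈ Sᶜ, x s(a, b) := by
  rw [← Finset.sum_product']
  refine (Finset.sum_bij (fun p _ => s(p.1, p.2)) ?_ ?_ ?_ ?_).symm
  · rintro ⟨a, b⟩ hp
    simp only [Finset.mem_product, Finset.mem_compl] at hp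
    have hab : a ≠ b := fun h => hp.2 (h ▸ hp.1)
    simp only [cut, Finset.mem_filter, Finset.mem_univ, true_and]
    exact ⟨by simp [hab], a, b, rfl, hp.1, hp.2⟩
  · rintro ⟨a, b⟩ hp ⟨c, d⟩ hq h
    simp only [Finset.mem_product, Finset.mem_compl] at hp hq
    rw [Sym2.eq_iff] at h
    rcases h with ⟨h1, h2⟩ | ⟨h1, h2⟩
    · simp_all [Prod.ext_iff]
    · simp only at h1 h2
      subst h1; subst h2
      exact absurd hq.1 hp.2
  · intro e he
    simp only [cut, Finset.mem_filter] at he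
    obtain ⟨_, _, a, b, rfl, ha, hb⟩ := he
    exact ⟨⟨a, b⟩, by simp [Finset.mem_product, ha, hb], rfl⟩
  · intros; rfl

lemma cut_compl_sum {n : ℕ} (S : Finset (Fin n)) (x : Sym2 (Fin n) → ℝ) :
    ∑ e ∈ cut Sᶜ, x e = ∑ e ∈ cut S, x e := by
  rw [cut_sum, cut_sum, compl_compl, Finset.sum_comm]
  exact Finset.sum_congr rfl fun a _ => Finset.sum_congr rfl fun b _ => by
    rw [Sym2.eq_swap]

lemma cut_singleton_sum {n : ℕ} (t : Fin n) (x : Sym2 (Fin n) → ℝ) :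
    ∑ e ∈ cut {t}, x e = ∑ b ∈ ({t}ᶜ : Finset (Fin n)), x s(t, b) := by
  rw [cut_sum, Finset.sum_singleton]

def contractF {n : ℕ} (u v : Fin n) (y' : Sym2 (Fin (n + 1)) → ℝ) :
    Sym2 (Fin n) → ℝ :=
  fun f => if f = s(u, v) then 1 else y' (f.map Fin.castSucc)

lemma sum_compl_image {n : ℕ} (S₀ : Finset (Fin n)) (f : Fin (n + 1) → ℝ) :
    ∑ b ∈ (S₀.image Fin.castSucc)ᶜ, f b
      = ∑ b ∈ S₀ᶜ, f b.castSucc + f (Fin.last n) := by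
  have h1 := Finset.sum_compl_add_sum (S₀.image Fin.castSucc) f
  have h2 := Finset.sum_compl_add_sum S₀ (fun b => f b.castSucc)
  have h3 : ∑ b ∈ S₀.image Fin.castSucc, f b = ∑ b ∈ S₀, f b.castSucc :=
    Finset.sum_image (fun a _ b _ h => Fin.castSucc_injective n h)
  have h4 : ∑ b : Fin (n + 1), f b = ∑ b : Fin n, f b.castSucc + f (Fin.last n) :=
    Fin.sum_univ_castSucc f
  linarith

lemma sum_compl_insert_image {n : ℕ} (S₀ : Finset (Fin n)) (f : Fin (n + 1) → ℝ) :
    ∑ b ∈ (insert (Fin.last n) (S₀.image Fin.castSucc))ᶜ, f b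
      = ∑ b ∈ S₀ᶜ, f b.castSucc := by
  have hw : Fin.last n ∉ S₀.image Fin.castSucc := by
    simp only [Finset.mem_image, not_exists]
    rintro a ⟨-, ha⟩
    exact absurd ha (Fin.castSucc_lt_last a).ne
  have h1 := Finset.sum_compl_add_sum (insert (Fin.last n) (S₀.image Fin.castSucc)) f
  rw [Finset.sum_insert hw] at h1
  have h2 := Finset.sum_compl_add_sum S₀ (fun b => f b.castSucc)
  have h3 : ∑ b ∈ S₀.image Fin.castSucc, f b = ∑ b ∈ S₀, f b.castSucc :=
    Finset.sum_image (fun a _ b _ h => Fin.castSucc_injective n h)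
  have h4 : ∑ b : Fin (n + 1), f b = ∑ b : Fin n, f b.castSucc + f (Fin.last n) :=
    Fin.sum_univ_castSucc f
  linarith

section Transfer
variable {n : ℕ} (u v : Fin n) (huv : u ≠ v) (y' : Sym2 (Fin (n + 1)) → ℝ)
  (hw0 : ∀ z : Fin n, z ≠ u → z ≠ v → y' s(z.castSucc, Fin.last n) = 0)
  (huv0 : y' s(u.castSucc, v.castSucc) = 0)
  (hu1 : y' s(u.castSucc, Fin.last n) = 1)
  (hv1 : y' s(v.castSucc, Fin.last n) = 1)

include huv huv0 in
lemma term1_eq (S₀ : Finset (Fin n)) :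
    ∑ a ∈ S₀, ∑ b ∈ S₀ᶜ, y' s(a.castSucc, b.castSucc)
      = ∑ a ∈ S₀, ∑ b ∈ S₀ᶜ, contractF u v y' s(a, b)
        - (if u ∈ S₀ then (if v ∈ S₀ᶜ then (1:ℝ) else 0) else 0)
        - (if v ∈ S₀ then (if u ∈ S₀ᶜ then (1:ℝ) else 0) else 0) := by
  have key : ∀ a ∈ S₀, ∀ b ∈ S₀ᶜ, contractF u v y' s(a, b)
      = y' s(a.castSucc, b.castSucc)
        + ((if a = u then (if b = v then (1:ℝ) else 0) else 0)
          + (if a = v then (if b = u then (1:ℝ) else 0) else 0)) := by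
    intro a _ b _
    by_cases h : s(a, b) = s(u, v)
    · rcases Sym2.eq_iff.mp h with ⟨ha, hb⟩ | ⟨ha, hb⟩
      · subst ha; subst hb
        simp [contractF, h, huv0, huv, huv.symm]
      · subst ha; subst hb
        have h0 : y' s(a.castSucc, b.castSucc) = 0 := by
          rw [Sym2.eq_swap]; exact huv0
        simp [contractF, h, h0, huv, huv.symm]
    · have h1 : ¬(a = u ∧ b = v) ∧ ¬(a = v ∧ b = u) := by
        constructor <;> rintro ⟨rfl, rfl⟩ <;> simp [Sym2.eq_swap] at h
      rw [contractF, if_neg h, Sym2.map_pair_eq]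
      by_cases ha : a = u <;> by_cases hb : b = v <;>
        by_cases ha' : a = v <;> by_cases hb' : b = u <;> simp_all
  rw [Finset.sum_congr rfl (fun a ha => Finset.sum_congr rfl (fun b hb => key a ha b hb))]
  simp only [Finset.sum_add_distrib]
  have e1 : ∀ c d : Fin n, ∑ a ∈ S₀, ∑ b ∈ S₀ᶜ,
      (if a = c then (if b = d then (1:ℝ) else 0) else 0)
      = if c ∈ S₀ then (if d ∈ S₀ᶜ then (1:ℝ) else 0) else 0 := by
    intro c d
    have inner : ∀ a : Fin n, ∑ b ∈ S₀ᶜ,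
        (if a = c then (if b = d then (1:ℝ) else 0) else 0)
        = if a = c then (if d ∈ S₀ᶜ then (1:ℝ) else 0) else 0 := by
      intro a
      by_cases h : a = c
      · simp [h, Finset.sum_ite_eq']
      · simp [h]
    rw [Finset.sum_congr rfl fun a _ => inner a, Finset.sum_ite_eq' S₀ c]
  rw [e1 u v, e1 v u]
  ring

include huv hw0 hu1 hv1 in
lemma wedge_sum (S₀ : Finset (Fin n)) :
    ∑ a ∈ S₀, y' s(a.castSucc, Fin.last n)
      = (if u ∈ S₀ then (1:ℝ) else 0) + (if v ∈ S₀ then (1:ℝ) else 0) := by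
  have key : ∀ a ∈ S₀, y' s(a.castSucc, Fin.last n)
      = (if a = u then (1:ℝ) else 0) + (if a = v then (1:ℝ) else 0) := by
    intro a _
    by_cases ha : a = u
    · subst ha; simp [hu1, huv]
    · by_cases ha' : a = v
      · subst ha'; simp [hv1, ha]
      · simp [hw0 a ha ha', ha, ha']
  rw [Finset.sum_congr rfl key, Finset.sum_add_distrib,
    Finset.sum_ite_eq' S₀ u, Finset.sum_ite_eq' S₀ v]

include huv hw0 huv0 hu1 hv1 in
lemma transferA (S₀ : Finset (Fin n)) :
    ∑ e ∈ cut (S₀.image Fin.castSucc), y' e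
      = ∑ e ∈ cut S₀, contractF u v y' e
        + (if u ∈ S₀ ∧ v ∈ S₀ then 2 else 0) := by
  have hinj : ∀ a ∈ S₀, ∀ b ∈ S₀, a.castSucc = b.castSucc → a = b :=
    fun a _ b _ h => Fin.castSucc_injective n h
  rw [cut_sum, Finset.sum_image hinj]
  have hstep : ∀ a ∈ S₀, ∑ b ∈ (S₀.image Fin.castSucc)ᶜ, y' s(a.castSucc, b)
      = ∑ b ∈ S₀ᶜ, y' s(a.castSucc, b.castSucc) + y' s(a.castSucc, Fin.last n) :=
    fun a _ => sum_compl_image S₀ (fun b => y' s(a.castSucc, b))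
  rw [Finset.sum_congr rfl hstep, Finset.sum_add_distrib,
    term1_eq u v huv y' huv0 S₀, wedge_sum u v huv y' hw0 hu1 hv1 S₀, cut_sum]
  by_cases hu : u ∈ S₀ <;> by_cases hv : v ∈ S₀ <;>
    simp [hu, hv, Finset.mem_compl] <;> ring

include huv hw0 huv0 hu1 hv1 in
lemma transferB (S₀ : Finset (Fin n)) :
    ∑ e ∈ cut (insert (Fin.last n) (S₀.image Fin.castSucc)), y' e
      = ∑ e ∈ cut S₀, contractF u v y' e
        + (if u ∉ S₀ ∧ v ∉ S₀ then 2 else 0) := by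
  have hw : Fin.last n ∉ S₀.image Fin.castSucc := by
    simp only [Finset.mem_image, not_exists]
    rintro a ⟨-, ha⟩
    exact absurd ha (Fin.castSucc_lt_last a).ne
  have hinj : ∀ a ∈ S₀, ∀ b ∈ S₀, a.castSucc = b.castSucc → a = b :=
    fun a _ b _ h => Fin.castSucc_injective n h
  rw [cut_sum, Finset.sum_insert hw, Finset.sum_image hinj]
  have hstep : ∀ a ∈ S₀, ∑ b ∈ (insert (Fin.last n) (S₀.image Fin.castSucc))ᶜ,
        y' s(a.castSucc, b)
      = ∑ b ∈ S₀ᶜ, y' s(a.castSucc, b.castSucc) :=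
    fun a _ => sum_compl_insert_image S₀ (fun b => y' s(a.castSucc, b))
  rw [Finset.sum_congr rfl hstep, term1_eq u v huv y' huv0 S₀]
  have hlast : ∑ b ∈ (insert (Fin.last n) (S₀.image Fin.castSucc))ᶜ, y' s(Fin.last n, b)
      = ∑ b ∈ S₀ᶜ, y' s(b.castSucc, Fin.last n) := by
    rw [sum_compl_insert_image S₀ (fun b => y' s(Fin.last n, b))]
    exact Finset.sum_congr rfl fun b _ => by rw [Sym2.eq_swap]
  rw [hlast, wedge_sum u v huv y' hw0 hu1 hv1 S₀ᶜ, cut_sum]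
  by_cases hu : u ∈ S₀ <;> by_cases hv : v ∈ S₀ <;>
    simp [hu, hv, Finset.mem_compl] <;> ring

end Transfer

lemma cut_sum_congr {n : ℕ} (S : Finset (Fin n)) {f g : Sym2 (Fin n) → ℝ}
    (h : ∀ a b : Fin n, a ≠ b → f s(a, b) = g s(a, b)) :
    ∑ e ∈ cut S, f e = ∑ e ∈ cut S, g e := by
  rw [cut_sum, cut_sum]
  refine Finset.sum_congr rfl fun a ha => Finset.sum_congr rfl fun b hb => ?_
  exact h a b (fun hab => (Finset.mem_compl.mp hb) (hab ▸ ha))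

lemma cut_sum_nonneg {n : ℕ} (S : Finset (Fin n)) {f : Sym2 (Fin n) → ℝ}
    (h : ∀ e ∈ edgeSet n, 0 ≤ f e) : 0 ≤ ∑ e ∈ cut S, f e := by
  rw [cut_sum]
  refine Finset.sum_nonneg fun a ha => Finset.sum_nonneg fun b hb => ?_
  refine h _ ((mem_edgeSet a b).mpr fun hab => (Finset.mem_compl.mp hb) (hab ▸ ha))

lemma cut_empty_sum {n : ℕ} (f : Sym2 (Fin n) → ℝ) :
    ∑ e ∈ cut (∅ : Finset (Fin n)), f e = 0 := by
  rw [cut_sum]; simp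

lemma exists_image {n : ℕ} (S : Finset (Fin (n + 1))) (hw : Fin.last n ∉ S) :
    ∃ S₀ : Finset (Fin n), S = S₀.image Fin.castSucc ∧ S₀.card = S.card := by
  have hset : S = (Finset.univ.filter (fun a : Fin n => a.castSucc ∈ S)).image Fin.castSucc := by
    ext c
    simp only [Finset.mem_image, Finset.mem_filter, Finset.mem_univ, true_and]
    constructor
    · intro hc
      have hne : c ≠ Fin.last n := fun h => hw (h ▸ hc)
      obtain ⟨c₀, rfl⟩ := Fin.exists_castSucc_eq.mpr hne
      exact ⟨c₀, hc, rfl⟩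
    · rintro ⟨c₀, hc, rfl⟩; exact hc
  refine ⟨Finset.univ.filter (fun a => a.castSucc ∈ S), hset, ?_⟩
  conv_rhs => rw [hset]
  exact (Finset.card_image_of_injective _ (Fin.castSucc_injective n)).symm


lemma lift_mem (n : ℕ) (hn : 3 ≤ n) (u v : Fin n) (huv : u ≠ v)
    (x : Sym2 (Fin n) → ℝ) (hx : InSubtour n x)
    (x' : Sym2 (Fin (n + 1)) → ℝ)
    (hw0 : ∀ z : Fin n, z ≠ u → z ≠ v → x' s(z.castSucc, Fin.last n) = 0)
    (huv0 : x' s(u.castSucc, v.castSucc) = 0)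
    (hu1 : x' s(u.castSucc, Fin.last n) = 1)
    (hv1 : x' s(v.castSucc, Fin.last n) = 1)
    (hcx : ∀ a b : Fin n, a ≠ b → contractF u v x' s(a, b) = x s(a, b)) :
    InSubtour (n + 1) x' := by
  obtain ⟨hxb, hxdeg, hxsub⟩ := hx
  have hcs : ∀ S₀ : Finset (Fin n), ∑ e ∈ cut S₀, contractF u v x' e = ∑ e ∈ cut S₀, x e :=
    fun S₀ => cut_sum_congr S₀ hcx
  refine ⟨?_, ?_, ?_⟩
  · -- bounds
    intro e he'
    induction e using Sym2.ind with
    | _ a b =>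
    rw [mem_edgeSet] at he'
    induction a using Fin.lastCases with
    | last =>
      induction b using Fin.lastCases with
      | last => exact absurd rfl he'
      | cast b₀ =>
        rw [Sym2.eq_swap]
        by_cases hb : b₀ = u
        · subst hb; rw [hu1]; norm_num
        · by_cases hb' : b₀ = v
          · subst hb'; rw [hv1]; norm_num
          · rw [hw0 b₀ hb hb']; norm_num
    | cast a₀ =>
      induction b using Fin.lastCases with
      | last =>
        by_cases hb : a₀ = u
        · subst hb; rw [hu1]; norm_num
        · by_cases hb' : a₀ = v
          · subst hb'; rw [hv1]; norm_num
          · rw [hw0 a₀ hb hb']; norm_num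
      | cast b₀ =>
        have hab : a₀ ≠ b₀ := fun h => he' (by rw [h])
        by_cases h : s(a₀, b₀) = s(u, v)
        · have : x' s(a₀.castSucc, b₀.castSucc) = 0 := by
            rcases Sym2.eq_iff.mp h with ⟨rfl, rfl⟩ | ⟨rfl, rfl⟩
            · exact huv0
            · rw [Sym2.eq_swap]; exact huv0
          rw [this]; norm_num
        · have := hcx a₀ b₀ hab
          rw [contractF, if_neg h, Sym2.map_pair_eq] at this
          rw [this]
          exact hxb _ ((mem_edgeSet a₀ b₀).mpr hab)
  · -- degrees
    intro t
    induction t using Fin.lastCases with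
    | last =>
      have hset : ({Fin.last n} : Finset (Fin (n + 1)))
          = insert (Fin.last n) ((∅ : Finset (Fin n)).image Fin.castSucc) := by simp
      rw [hset, transferB u v huv x' hw0 huv0 hu1 hv1, cut_empty_sum]
      simp
    | cast t₀ =>
      have hset : ({t₀.castSucc} : Finset (Fin (n + 1)))
          = ({t₀} : Finset (Fin n)).image Fin.castSucc := by simp
      rw [hset, transferA u v huv x' hw0 huv0 hu1 hv1, hcs, hxdeg t₀]
      have : ¬(u ∈ ({t₀} : Finset (Fin n)) ∧ v ∈ ({t₀} : Finset (Fin n))) := by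
        rintro ⟨hu', hv'⟩
        simp only [Finset.mem_singleton] at hu' hv'
        exact huv (hu'.trans hv'.symm)
      rw [if_neg this, add_zero]
  · -- subtour
    have main : ∀ S : Finset (Fin (n + 1)), Fin.last n ∉ S →
        2 ≤ S.card → S.card ≤ (n + 1) - 2 → 2 ≤ ∑ e ∈ cut S, x' e := by
      intro S hwS hc2 hcu
      obtain ⟨S₀, rfl, hcard⟩ := exists_image S hwS
      rw [transferA u v huv x' hw0 huv0 hu1 hv1, hcs]
      by_cases hb : u ∈ S₀ ∧ v ∈ S₀
      · rw [if_pos hb]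
        have := cut_sum_nonneg S₀ (fun e he => (hxb e he).1)
        linarith
      · rw [if_neg hb, add_zero]
        by_cases hsmall : S₀.card ≤ n - 2
        · exact hxsub S₀ (by omega) hsmall
        · have hcard1 : S₀ᶜ.card = 1 := by
            have h1 : S₀.card ≤ n - 1 := by omega
            have h2 : S₀ᶜ.card = n - S₀.card := by
              rw [Finset.card_compl, Fintype.card_fin]
            omega
          obtain ⟨t, ht⟩ := Finset.card_eq_one.mp hcard1
          rw [← cut_compl_sum, ht, hxdeg t]
    intro S hc2 hcu
    by_cases hwS : Fin.last n ∈ S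
    · rw [← cut_compl_sum]
      have hcS : Sᶜ.card = (n + 1) - S.card := by
        rw [Finset.card_compl, Fintype.card_fin]
      have hSu : S.card ≤ n + 1 := by
        have := Finset.card_le_univ S; simpa using this
      exact main Sᶜ (by simp [hwS]) (by omega) (by omega)
    · exact main S hwS hc2 hcu

lemma contract_mem (n : ℕ) (hn : 3 ≤ n) (u v : Fin n) (huv : u ≠ v)
    (y : Sym2 (Fin (n + 1)) → ℝ) (hy : InSubtour (n + 1) y)
    (hw0 : ∀ z : Fin n, z ≠ u → z ≠ v → y s(z.castSucc, Fin.last n) = 0)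
    (huv0 : y s(u.castSucc, v.castSucc) = 0)
    (hu1 : y s(u.castSucc, Fin.last n) = 1)
    (hv1 : y s(v.castSucc, Fin.last n) = 1) :
    InSubtour n (contractF u v y) := by
  obtain ⟨hyb, hydeg, hysub⟩ := hy
  refine ⟨?_, ?_, ?_⟩
  · intro e he'
    induction e using Sym2.ind with
    | _ a b =>
    rw [mem_edgeSet] at he'
    by_cases h : s(a, b) = s(u, v)
    · rw [contractF, if_pos h]; norm_num
    · rw [contractF, if_neg h, Sym2.map_pair_eq]
      refine hyb _ ((mem_edgeSet _ _).mpr ?_)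
      exact fun hc => he' (Fin.castSucc_injective n hc)
  · intro t
    have hset : ({t.castSucc} : Finset (Fin (n + 1)))
        = ({t} : Finset (Fin n)).image Fin.castSucc := by simp
    have := hydeg t.castSucc
    rw [hset, transferA u v huv y hw0 huv0 hu1 hv1] at this
    have hnb : ¬(u ∈ ({t} : Finset (Fin n)) ∧ v ∈ ({t} : Finset (Fin n))) := by
      rintro ⟨hu', hv'⟩
      simp only [Finset.mem_singleton] at hu' hv'
      exact huv (hu'.trans hv'.symm)
    rw [if_neg hnb, add_zero] at this
    exact this
  · intro S₀ hc2 hcu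
    by_cases hb : u ∈ S₀ ∧ v ∈ S₀
    · have hwim : Fin.last n ∉ S₀.image Fin.castSucc := by
        simp only [Finset.mem_image, not_exists]
        rintro a ⟨-, ha⟩
        exact absurd ha (Fin.castSucc_lt_last a).ne
      have hcard : (insert (Fin.last n) (S₀.image Fin.castSucc)).card = S₀.card + 1 := by
        rw [Finset.card_insert_of_notMem hwim,
          Finset.card_image_of_injective _ (Fin.castSucc_injective n)]
      have hge := hysub (insert (Fin.last n) (S₀.image Fin.castSucc))
        (by omega) (by omega)
      rw [transferB u v huv y hw0 huv0 hu1 hv1,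
        if_neg (by rintro ⟨h1', -⟩; exact h1' hb.1), add_zero] at hge
      exact hge
    · have hcard : (S₀.image Fin.castSucc).card = S₀.card :=
        Finset.card_image_of_injective _ (Fin.castSucc_injective n)
      have hge := hysub (S₀.image Fin.castSucc) (by omega) (by omega)
      rw [transferA u v huv y hw0 huv0 hu1 hv1, if_neg hb, add_zero] at hge
      exact hge


/-- Subdividing a 1-edge of an extreme point of `S^n` yields an extreme point
of `S^{n+1}`. -/
theorem subdivide_one_edge_extreme (n : ℕ) (hn : 3 ≤ n) (u v : Fin n) (huv : u ≠ v)
    (x : Sym2 (Fin n) → ℝ) (hx : IsExtremePt n x) (he : x s(u, v) = 1)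
    (x' : Sym2 (Fin (n + 1)) → ℝ)
    (h1 : x' s(u.castSucc, Fin.last n) = 1)
    (h2 : x' s(Fin.last n, v.castSucc) = 1)
    (h3 : x' s(u.castSucc, v.castSucc) = 0)
    (h4 : ∀ z : Fin n, z ≠ u → z ≠ v → x' s(z.castSucc, Fin.last n) = 0)
    (h5 : ∀ a b : Fin n, s(a, b) ≠ s(u, v) → x' s(a.castSucc, b.castSucc) = x s(a, b)) :
    IsExtremePt (n + 1) x' := by
  obtain ⟨hxmem, hxext⟩ := hx
  have hv1 : x' s(v.castSucc, Fin.last n) = 1 := by rw [Sym2.eq_swap]; exact h2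
  have hcx : ∀ a b : Fin n, a ≠ b → contractF u v x' s(a, b) = x s(a, b) := by
    intro a b hab
    by_cases h : s(a, b) = s(u, v)
    · rw [contractF, if_pos h]
      exact ((congrArg x h).trans he).symm
    · rw [contractF, if_neg h, Sym2.map_pair_eq]
      exact h5 a b h
  have hmem' : InSubtour (n + 1) x' := lift_mem n hn u v huv x hxmem x' h4 h3 h1 hv1 hcx
  refine ⟨hmem', ?_⟩
  intro y z hy hz hmid
  -- forced values on special edges
  have force1 : ∀ e ∈ edgeSet (n + 1), x' e = 1 → y e = 1 ∧ z e = 1 := by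
    intro e hee h1'
    have hm := hmid e hee
    have hby := (hy.1 e hee).2
    have hbz := (hz.1 e hee).2
    rw [h1'] at hm
    constructor <;> linarith
  have force0 : ∀ e ∈ edgeSet (n + 1), x' e = 0 → y e = 0 ∧ z e = 0 := by
    intro e hee h0'
    have hm := hmid e hee
    have hby := (hy.1 e hee).1
    have hbz := (hz.1 e hee).1
    rw [h0'] at hm
    constructor <;> linarith
  have euw : s(u.castSucc, Fin.last n) ∈ edgeSet (n + 1) :=
    (mem_edgeSet _ _).mpr (Fin.castSucc_lt_last u).ne
  have evw : s(v.castSucc, Fin.last n) ∈ edgeSet (n + 1) :=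
    (mem_edgeSet _ _).mpr (Fin.castSucc_lt_last v).ne
  have euv : s(u.castSucc, v.castSucc) ∈ edgeSet (n + 1) :=
    (mem_edgeSet _ _).mpr (fun h => huv (Fin.castSucc_injective n h))
  have hyu1 := (force1 _ euw h1).1
  have hzu1 := (force1 _ euw h1).2
  have hyv1 := (force1 _ evw hv1).1
  have hzv1 := (force1 _ evw hv1).2
  have hyuv0 := (force0 _ euv h3).1
  have hzuv0 := (force0 _ euv h3).2
  have hyw0 : ∀ c : Fin n, c ≠ u → c ≠ v → y s(c.castSucc, Fin.last n) = 0 := by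
    intro c hcu hcv
    exact (force0 _ ((mem_edgeSet _ _).mpr (Fin.castSucc_lt_last c).ne) (h4 c hcu hcv)).1
  have hzw0 : ∀ c : Fin n, c ≠ u → c ≠ v → z s(c.castSucc, Fin.last n) = 0 := by
    intro c hcu hcv
    exact (force0 _ ((mem_edgeSet _ _).mpr (Fin.castSucc_lt_last c).ne) (h4 c hcu hcv)).2
  have hymem := contract_mem n hn u v huv y hy hyw0 hyuv0 hyu1 hyv1
  have hzmem := contract_mem n hn u v huv z hz hzw0 hzuv0 hzu1 hzv1
  have hmid₀ : ∀ f ∈ edgeSet n, x f = (contractF u v y f + contractF u v z f) / 2 := by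
    intro f hf
    induction f using Sym2.ind with
    | _ a b =>
    rw [mem_edgeSet] at hf
    by_cases h : s(a, b) = s(u, v)
    · rw [contractF, contractF, if_pos h, if_pos h, (congrArg x h).trans he]
      norm_num
    · rw [contractF, contractF, if_neg h, if_neg h, Sym2.map_pair_eq, ← h5 a b h]
      exact hmid _ ((mem_edgeSet _ _).mpr (fun hc => hf (Fin.castSucc_injective n hc)))
  have hfin := hxext (contractF u v y) (contractF u v z) hymem hzmem hmid₀
  intro e hee
  induction e using Sym2.ind with
  | _ a b =>
  rw [mem_edgeSet] at hee
  induction a using Fin.lastCases with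
  | last =>
    induction b using Fin.lastCases with
    | last => exact absurd rfl hee
    | cast b₀ =>
      rw [Sym2.eq_swap]
      by_cases hb : b₀ = u
      · subst hb; rw [hyu1, hzu1]
      · by_cases hb' : b₀ = v
        · subst hb'; rw [hyv1, hzv1]
        · rw [hyw0 b₀ hb hb', hzw0 b₀ hb hb']
  | cast a₀ =>
    induction b using Fin.lastCases with
    | last =>
      by_cases hb : a₀ = u
      · subst hb; rw [hyu1, hzu1]
      · by_cases hb' : a₀ = v
        · subst hb'; rw [hyv1, hzv1]
        · rw [hyw0 a₀ hb hb', hzw0 a₀ hb hb']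
    | cast b₀ =>
      have hab : a₀ ≠ b₀ := fun h => hee (by rw [h])
      by_cases h : s(a₀, b₀) = s(u, v)
      · have hy0 : y s(a₀.castSucc, b₀.castSucc) = 0 := by
          rcases Sym2.eq_iff.mp h with ⟨rfl, rfl⟩ | ⟨rfl, rfl⟩
          · exact hyuv0
          · rw [Sym2.eq_swap]; exact hyuv0
        have hz0 : z s(a₀.castSucc, b₀.castSucc) = 0 := by
          rcases Sym2.eq_iff.mp h with ⟨rfl, rfl⟩ | ⟨rfl, rfl⟩
          · exact hzuv0
          · rw [Sym2.eq_swap]; exact hzuv0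
        rw [hy0, hz0]
      · have := hfin s(a₀, b₀) ((mem_edgeSet _ _).mpr hab)
        rw [contractF, contractF, if_neg h, if_neg h, Sym2.map_pair_eq] at this
        exact this
end
end
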